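/- arXiv:1502.03191 — 6 statements merged into one kernel-verified Lean document; each statement's English description precedes it below -/
import Mathlib

section
/- Let P_L, P_R, B̂, T be unit vectors in ℝ³ with P_L, P_R, B̂ all orthogonal to T, with B̂ ⬝ P_L = B̂ ⬝ P_R > 0 and P_L ≠ P_R. Then the cross products P_L × P_R, P_L × B̂, and B̂ × P_R are all nonnegative multiples of one another; in particular the signs of (P_L × P_R) ⬝ T, (P_L × B̂) ⬝ T, and (B̂ × P_R) ⬝ T all coincide. -/
/-!
Since `P_L`, `P_R` and `B̂` all lie in the plane `T⊥`, each cross product of two of them is a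
multiple of the unit normal `T`, and two multiples of `T` are nonnegative multiples of each other,
with the same sign against `T`, as soon as their inner product is positive. By the Binet–Cauchy
identity, `⟪P_L × B̂, P_L × P_R⟫ = ⟪B̂, P_L⟫ (1 - ⟪P_L, P_R⟫) = ⟪B̂ × P_R, P_L × P_R⟫`, which is
positive because `⟪B̂, P_L⟫ > 0` and the distinct unit vectors `P_L`, `P_R` have `⟪P_L, P_R⟫ < 1`.
-/

noncomputable section
open scoped RealInnerProductSpace
open Set

abbrev E3 := EuclideanSpace ℝ (Fin 3)
abbrev E2 := EuclideanSpace ℝ (Fin 2)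

def cross (u v : E3) : E3 :=
  (WithLp.equiv 2 (Fin 3 → ℝ)).symm ![u 1 * v 2 - u 2 * v 1, u 2 * v 0 - u 0 * v 2, u 0 * v 1 - u 1 * v 0]

open Matrix

theorem Real.sign_eq_sign_of_mul_pos {p r : ℝ} (h : 0 < p * r) : Real.sign p = Real.sign r := by
  rcases mul_pos_iff.mp h with ⟨hp, hr⟩ | ⟨hp, hr⟩
  · rw [Real.sign_of_pos hp, Real.sign_of_pos hr]
  · rw [Real.sign_of_neg hp, Real.sign_of_neg hr]

section ParallelVectors

variable {V : Type*} [NormedAddCommGroup V] [InnerProductSpace ℝ V] {x z t : V} {p r : ℝ}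

theorem exists_nonneg_smul_of_inner_pos (hx : x = p • t) (hz : z = r • t) (hxz : 0 < ⟪x, z⟫) :
    ∃ a : ℝ, 0 ≤ a ∧ x = a • z := by
  subst hx hz
  rw [real_inner_smul_left, real_inner_smul_right, ← mul_assoc] at hxz
  have hpr : 0 < p * r := pos_of_mul_pos_left hxz real_inner_self_nonneg
  have hr : r ≠ 0 := right_ne_zero_of_mul hpr.ne'
  refine ⟨p / r, ?_, by rw [smul_smul, div_mul_cancel₀ p hr]⟩
  rcases mul_pos_iff.mp hpr with ⟨hp, hr⟩ | ⟨hp, hr⟩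
  · exact (div_pos hp hr).le
  · exact (div_pos_of_neg_of_neg hp hr).le

theorem sign_inner_eq_of_inner_pos (hx : x = p • t) (hz : z = r • t) (hxz : 0 < ⟪x, z⟫) :
    Real.sign ⟪x, t⟫ = Real.sign ⟪z, t⟫ := by
  have ht : t ≠ 0 := by rintro rfl; simp_all
  apply Real.sign_eq_sign_of_mul_pos
  have : ⟪x, t⟫ * ⟪z, t⟫ = ⟪x, z⟫ * ⟪t, t⟫ := by
    subst hx hz; simp only [real_inner_smul_left, real_inner_smul_right]; ring
  rw [this]
  exact mul_pos hxz (real_inner_self_pos.mpr ht)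

end ParallelVectors

theorem crossProduct_eq_dotProduct_smul {R : Type*} [CommRing R] {u v t : Fin 3 → R}
    (hu : u ⬝ᵥ t = 0) (hv : v ⬝ᵥ t = 0) (ht : t ⬝ᵥ t = 1) :
    u ⨯₃ v = (u ⨯₃ v ⬝ᵥ t) • t := by
  have hperp : u ⨯₃ v ⨯₃ t = 0 := by
    rw [cross_cross_eq_smul_sub_smul, hu, hv, zero_smul, zero_smul, sub_zero]
  have h := cross_cross_eq_smul_sub_smul' t (u ⨯₃ v) t
  rw [hperp, map_zero, ht, one_smul] at h
  exact sub_eq_zero.mp h.symm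

theorem cross_eq_toLp_crossProduct (u v : E3) :
    cross u v = WithLp.toLp 2 (u.ofLp ⨯₃ v.ofLp) := by
  rw [cross_apply]; rfl

theorem inner_eq_dotProduct (u v : E3) : ⟪u, v⟫ = u.ofLp ⬝ᵥ v.ofLp := by
  rw [EuclideanSpace.inner_eq_star_dotProduct, dotProduct_comm]; rfl

theorem inner_cross_cross (a b c d : E3) :
    ⟪cross a b, cross c d⟫ = ⟪a, c⟫ * ⟪b, d⟫ - ⟪a, d⟫ * ⟪b, c⟫ := by
  simp only [inner_eq_dotProduct, cross_eq_toLp_crossProduct, cross_dot_cross]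

theorem cross_eq_inner_smul {u v t : E3} (hu : ⟪u, t⟫ = 0) (hv : ⟪v, t⟫ = 0) (ht : ‖t‖ = 1) :
    cross u v = ⟪cross u v, t⟫ • t := by
  have htt : t.ofLp ⬝ᵥ t.ofLp = 1 := by
    rw [← inner_eq_dotProduct, inner_self_eq_one_of_norm_eq_one ht]
  rw [inner_eq_dotProduct] at hu hv ⊢
  rw [cross_eq_toLp_crossProduct]
  exact congrArg (WithLp.toLp 2) (crossProduct_eq_dotProduct_smul hu hv htt)

theorem bisector_cross_products_aligned_general (PL PR Bh T : E3)
    (hPL : ‖PL‖ = 1) (hPR : ‖PR‖ = 1) (hT : ‖T‖ = 1)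
    (hPLT : ⟪PL, T⟫ = 0) (hPRT : ⟪PR, T⟫ = 0) (hBT : ⟪Bh, T⟫ = 0)
    (heq : ⟪Bh, PL⟫ = ⟪Bh, PR⟫) (hpos : 0 < ⟪Bh, PL⟫) (hne : PL ≠ PR) :
    (∃ a : ℝ, 0 ≤ a ∧ cross PL Bh = a • cross PL PR) ∧
    (∃ b : ℝ, 0 ≤ b ∧ cross Bh PR = b • cross PL PR) ∧
    Real.sign ⟪cross PL Bh, T⟫ = Real.sign ⟪cross PL PR, T⟫ ∧
    Real.sign ⟪cross Bh PR, T⟫ = Real.sign ⟪cross PL PR, T⟫ := by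
  have hPLPR : ⟪PL, PR⟫ < 1 := (inner_lt_one_iff_real_of_norm_eq_one hPL hPR).mpr hne
  have hL : 0 < ⟪cross PL Bh, cross PL PR⟫ := by
    rw [inner_cross_cross, inner_self_eq_one_of_norm_eq_one hPL, ← heq]
    linarith [mul_pos hpos (sub_pos.mpr hPLPR)]
  have hR : 0 < ⟪cross Bh PR, cross PL PR⟫ := by
    rw [inner_cross_cross, inner_self_eq_one_of_norm_eq_one hPR, real_inner_comm PL PR, ← heq]
    linarith [mul_pos hpos (sub_pos.mpr hPLPR)]
  have hPLxPR := cross_eq_inner_smul hPLT hPRT hT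
  have hPLxB := cross_eq_inner_smul hPLT hBT hT
  have hBxPR := cross_eq_inner_smul hBT hPRT hT
  exact ⟨exists_nonneg_smul_of_inner_pos hPLxB hPLxPR hL,
    exists_nonneg_smul_of_inner_pos hBxPR hPLxPR hR,
    sign_inner_eq_of_inner_pos hPLxB hPLxPR hL, sign_inner_eq_of_inner_pos hBxPR hPLxPR hR⟩

/-- with B̂ bisecting P_L and P_R, the cross products P_L × P_R,
P_L × B̂, B̂ × P_R are nonnegative multiples of one another, and the signs of
their dot products with T coincide. -/
theorem bisector_cross_products_aligned (PL PR Bh T : E3)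
    (hPL : ‖PL‖ = 1) (hPR : ‖PR‖ = 1) (hB : ‖Bh‖ = 1) (hT : ‖T‖ = 1)
    (hPLT : ⟪PL, T⟫ = 0) (hPRT : ⟪PR, T⟫ = 0) (hBT : ⟪Bh, T⟫ = 0)
    (heq : ⟪Bh, PL⟫ = ⟪Bh, PR⟫) (hpos : 0 < ⟪Bh, PL⟫) (hne : PL ≠ PR) :
    (∃ a : ℝ, 0 ≤ a ∧ cross PL Bh = a • cross PL PR) ∧
    (∃ b : ℝ, 0 ≤ b ∧ cross Bh PR = b • cross PL PR) ∧
    Real.sign ⟪cross PL Bh, T⟫ = Real.sign ⟪cross PL PR, T⟫ ∧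
    Real.sign ⟪cross Bh PR, T⟫ = Real.sign ⟪cross PL PR, T⟫ :=
  bisector_cross_products_aligned_general PL PR Bh T hPL hPR hT hPLT hPRT hBT heq hpos hne
end
end

section
/- Let X : (0,ℓ) → ℝ³ be an arclength-parameterized C² curve with curvature K(s) > 0 and unit normal N(s), and let P : (0,ℓ) → ℝ³ be a unit vector field orthogonal to T(s) = X'(s) with B(s) ⬝ P(s) > 0 where B = T × N. Define the fold angle ρ(s) ∈ (−π, π) by cos ρ = P_L ⬝ P_R where P_L = P and P_R is the reflection of P_L across B in the plane orthogonal to T. If (K N) ⬝ (P_L × T) = k̂(s), then K(s) · cos(ρ(s)/2) = ±k̂(s); in particular |k̂(s)| ≤ K(s), with equality only when ρ(s) = 0. -/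
noncomputable section
open scoped RealInnerProductSpace
open Set

/-!
Write `B = T × N` and `b = P ⬝ B`. By the cyclic symmetry of the triple product,
`k̂ = K N ⬝ (P × T) = K (P ⬝ B) = K b`, while `cos ρ = P ⬝ (2 b B - P) = 2 b² - 1`, so
`cos (ρ/2) = b` because both are positive. Since `B` is a unit vector, `0 < b ≤ 1`, hence
`|k̂| = K b ≤ K`, with equality only if `cos (ρ/2) = 1`, i.e. `ρ = 0`.
-/

open Real

theorem inner_cross_rotate (u v w : E3) : ⟪w, cross u v⟫ = ⟪u, cross v w⟫ := by
  simp only [cross, WithLp.equiv_symm_apply, PiLp.inner_apply, RCLike.inner_apply, conj_trivial,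
    Fin.sum_univ_three, Matrix.cons_val_zero, Matrix.cons_val_one, Matrix.cons_val]
  ring

theorem real_inner_cross_self (u v : E3) :
    ⟪cross u v, cross u v⟫ = ⟪u, u⟫ * ⟪v, v⟫ - ⟪u, v⟫ ^ 2 := by
  simp only [cross, WithLp.equiv_symm_apply, PiLp.inner_apply, RCLike.inner_apply, conj_trivial,
    Fin.sum_univ_three, Matrix.cons_val_zero, Matrix.cons_val_one, Matrix.cons_val]
  ring

theorem norm_cross_eq_one {u v : E3} (hu : ‖u‖ = 1) (hv : ‖v‖ = 1) (huv : ⟪u, v⟫ = 0) :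
    ‖cross u v‖ = 1 := by
  have h : ‖cross u v‖ ^ 2 = 1 := by
    rw [← real_inner_self_eq_norm_sq, real_inner_cross_self, real_inner_self_eq_norm_sq,
      real_inner_self_eq_norm_sq, hu, hv, huv]
    norm_num
  exact (pow_eq_one_iff_of_nonneg (norm_nonneg _) two_ne_zero).mp h

theorem real_inner_reflection_self {F : Type*} [NormedAddCommGroup F] [InnerProductSpace ℝ F]
    (x b : F) : ⟪x, (2 * ⟪x, b⟫) • b - x⟫ = 2 * ⟪x, b⟫ ^ 2 - ‖x‖ ^ 2 := by
  rw [inner_sub_right, real_inner_smul_right, real_inner_self_eq_norm_sq]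
  ring

theorem Real.cos_half_eq_of_cos_eq {ρ b : ℝ} (hρ : ρ ∈ Ioo (-π) π) (hb : 0 ≤ b)
    (hcos : cos ρ = 2 * b ^ 2 - 1) : cos (ρ / 2) = b := by
  have hsq : cos (ρ / 2) ^ 2 = b ^ 2 := by
    rw [cos_sq, mul_div_cancel₀ ρ two_ne_zero, hcos]
    ring
  have hpos : 0 < cos (ρ / 2) :=
    cos_pos_of_mem_Ioo ⟨by linarith [hρ.1], by linarith [hρ.2]⟩
  exact (pow_left_inj₀ hpos.le hb two_ne_zero).mp hsq

theorem Real.eq_zero_of_cos_half_eq_one {ρ : ℝ} (hρ : ρ ∈ Ioo (-π) π)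
    (h : cos (ρ / 2) = 1) : ρ = 0 := by
  have hπ := pi_pos
  have : ρ / 2 = 0 :=
    (cos_eq_one_iff_of_lt_of_lt (by linarith [hρ.1]) (by linarith [hρ.2])).mp h
  linarith

theorem folding_increases_curvature_general (T N P : E3) (K ρ khat : ℝ)
    (hT : ‖T‖ = 1) (hN : ‖N‖ = 1) (hP : ‖P‖ = 1)
    (hNT : ⟪N, T⟫ = 0)
    (hK : 0 < K)
    (hBP : 0 < ⟪cross T N, P⟫)
    (hρ : ρ ∈ Ioo (-Real.pi) Real.pi)
    -- cos ρ = ⟪P_L, P_R⟫ with P_R the reflection of P_L := P across B = T × N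
    (hcos : Real.cos ρ = ⟪P, (2 * ⟪P, cross T N⟫) • cross T N - P⟫)
    -- geodesic curvature: (K N) ⬝ (P_L × T) = k̂
    (hgeo : ⟪K • N, cross P T⟫ = khat) :
    (K * Real.cos (ρ / 2) = khat ∨ K * Real.cos (ρ / 2) = -khat) ∧
    |khat| ≤ K ∧ (|khat| = K → ρ = 0) := by
  set b := ⟪P, cross T N⟫ with hb
  have hB : ‖cross T N‖ = 1 := norm_cross_eq_one hT hN (by rwa [real_inner_comm])
  have hb_pos : 0 < b := by rwa [hb, real_inner_comm]
  have hb_le : b ≤ 1 := (real_inner_le_norm P _).trans (by rw [hP, hB, one_mul])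
  have hkhat : khat = K * b := by
    rw [← hgeo, real_inner_smul_left, inner_cross_rotate]
  have hhalf : Real.cos (ρ / 2) = b :=
    Real.cos_half_eq_of_cos_eq hρ hb_pos.le (by rw [hcos, real_inner_reflection_self, hP]; ring)
  have habs : |khat| = K * b := by rw [hkhat, abs_of_pos (mul_pos hK hb_pos)]
  refine ⟨Or.inl (by rw [hhalf, hkhat]), ?_, fun heq => ?_⟩
  · rw [habs]
    exact mul_le_of_le_one_right hK.le hb_le
  · have hb_one : b = 1 := by
      rw [habs] at heq
      exact (mul_eq_left₀ hK.ne').mp heq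
    exact Real.eq_zero_of_cos_half_eq_one hρ (hhalf.trans hb_one)

/-- folding increases curvature: K cos(ρ/2) = ±k̂, so |k̂| ≤ K,
with equality only when the fold angle ρ is zero.  Here P_R is the reflection of
P_L across B in the plane orthogonal to T. -/
theorem folding_increases_curvature (T N P : E3) (K ρ khat : ℝ)
    (hT : ‖T‖ = 1) (hN : ‖N‖ = 1) (hP : ‖P‖ = 1)
    (hNT : ⟪N, T⟫ = 0) (hPT : ⟪P, T⟫ = 0)
    (hK : 0 < K)
    (hBP : 0 < ⟪cross T N, P⟫)
    (hρ : ρ ∈ Ioo (-Real.pi) Real.pi)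
    -- cos ρ = ⟪P_L, P_R⟫ with P_R the reflection of P_L := P across B = T × N
    (hcos : Real.cos ρ = ⟪P, (2 * ⟪P, cross T N⟫) • cross T N - P⟫)
    -- geodesic curvature: (K N) ⬝ (P_L × T) = k̂
    (hgeo : ⟪K • N, cross P T⟫ = khat) :
    (K * Real.cos (ρ / 2) = khat ∨ K * Real.cos (ρ / 2) = -khat) ∧
    |khat| ≤ K ∧ (|khat| = K → ρ = 0) :=
  folding_increases_curvature_general T N P K ρ khat hT hN hP hNT hK hBP hρ hcos hgeo
end
end

section
/- Let r₁, r₂, t be unit vectors in ℝ² with −t, r₁, r₂, t in clockwise order around the origin, so that ∠(−t, t) = ∠(−t, r₁) + ∠(r₁, r₂) + ∠(r₂, t) = π. Let R₁, R₂, T be unit vectors in ℝ³ satisfying ∠(−T, R₁) ≤ ∠(−t, r₁), ∠(R₁, R₂) < ∠(r₁, r₂), and ∠(R₂, T) ≤ ∠(r₂, t). Then ∠(−T, R₁) + ∠(R₁, R₂) + ∠(R₂, T) < π, and hence (by the spherical triangle inequality ∠(−T, T) ≤ ∠(−T, R₁) + ∠(R₁, R₂) + ∠(R₂, T)) no such configuration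 exists, since ∠(−T, T) = π. -/
/-! Between unit vectors `arccos ⟪u, v⟫` is the unoriented angle, so the spherical triangle
inequality, applied twice along `-T, R₁, R₂, T`, gives `π = ∠(-T, T) ≤ ∠(-T, R₁) + ∠(R₁, R₂) + ∠(R₂, T)`.
Folding does not increase the two outer angles and strictly decreases the middle one, so the
right-hand side is strictly below the planar sum, which is `π`. -/

noncomputable section
open scoped RealInnerProductSpace
open Set

open InnerProductGeometry

section

variable {V : Type*} [NormedAddCommGroup V] [InnerProductSpace ℝ V]

theorem arccos_inner_eq_angle_of_norm_eq_one {x y : V} (hx : ‖x‖ = 1) (hy : ‖y‖ = 1) :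
    Real.arccos ⟪x, y⟫ = angle x y := by
  simp [angle, hx, hy]

theorem pi_le_angle_neg_add_angle_add_angle {x y z : V} (hz : z ≠ 0) :
    Real.pi ≤ angle (-z) x + angle x y + angle y z :=
  calc Real.pi = angle (-z) z := (angle_neg_self_of_nonzero hz).symm
    _ ≤ angle (-z) y + angle y z := angle_le_angle_add_angle _ _ _
    _ ≤ angle (-z) x + angle x y + angle y z := by
      gcongr
      exact angle_le_angle_add_angle _ _ _

end

theorem cone_ruling_kink_general (t r₁ r₂ : E2) (T R₁ R₂ : E3)
    (hT : ‖T‖ = 1) (hR₁ : ‖R₁‖ = 1) (hR₂ : ‖R₂‖ = 1)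
    (h2D : Real.arccos ⟪-t, r₁⟫ + Real.arccos ⟪r₁, r₂⟫ + Real.arccos ⟪r₂, t⟫
            = Real.pi)
    (h₁ : Real.arccos ⟪-T, R₁⟫ ≤ Real.arccos ⟪-t, r₁⟫)
    (h₂ : Real.arccos ⟪R₁, R₂⟫ < Real.arccos ⟪r₁, r₂⟫)
    (h₃ : Real.arccos ⟪R₂, T⟫ ≤ Real.arccos ⟪r₂, t⟫) :
    Real.arccos ⟪-T, R₁⟫ + Real.arccos ⟪R₁, R₂⟫ + Real.arccos ⟪R₂, T⟫
      < Real.pi ∧ False := by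
  have hsum : Real.arccos ⟪-T, R₁⟫ + Real.arccos ⟪R₁, R₂⟫ + Real.arccos ⟪R₂, T⟫
      < Real.pi := by linarith
  refine ⟨hsum, ?_⟩
  have hchain := pi_le_angle_neg_add_angle_add_angle (x := R₁) (y := R₂) (z := T)
    (norm_ne_zero_iff.mp (by simp [hT]))
  rw [← arccos_inner_eq_angle_of_norm_eq_one (by rwa [norm_neg]) hR₁,
    ← arccos_inner_eq_angle_of_norm_eq_one hR₁ hR₂,
    ← arccos_inner_eq_angle_of_norm_eq_one hR₂ hT] at hchain
  linarith

/-- a cone ruling forces a kink: if the 2D angles around the crease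
point sum to π and folding weakly decreases the outer angles while strictly
decreasing the cone angle, the 3D angle sum is < π, contradicting the spherical
triangle inequality; no such configuration exists. -/
theorem cone_ruling_kink (t r₁ r₂ : E2) (T R₁ R₂ : E3)
    (ht : ‖t‖ = 1) (hr₁ : ‖r₁‖ = 1) (hr₂ : ‖r₂‖ = 1)
    (hT : ‖T‖ = 1) (hR₁ : ‖R₁‖ = 1) (hR₂ : ‖R₂‖ = 1)
    (h2D : Real.arccos ⟪-t, r₁⟫ + Real.arccos ⟪r₁, r₂⟫ + Real.arccos ⟪r₂, t⟫
            = Real.pi)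
    (h₁ : Real.arccos ⟪-T, R₁⟫ ≤ Real.arccos ⟪-t, r₁⟫)
    (h₂ : Real.arccos ⟪R₁, R₂⟫ < Real.arccos ⟪r₁, r₂⟫)
    (h₃ : Real.arccos ⟪R₂, T⟫ ≤ Real.arccos ⟪r₂, t⟫) :
    Real.arccos ⟪-T, R₁⟫ + Real.arccos ⟪R₁, R₂⟫ + Real.arccos ⟪R₂, T⟫
      < Real.pi ∧ False :=
  cone_ruling_kink_general t r₁ r₂ T R₁ R₂ hT hR₁ hR₂ h2D h₁ h₂ h₃
end
end

section
/- Cone isometry: let a ∈ ℝ² and A ∈ ℝ³, and let x : (0,ℓ₀) → ℝ², X : (0,ℓ₀) → ℝ³ be arclength-parameterized C¹ curves with ‖x(s) − a‖ = ‖X(s) − A‖ = L(s) > 0 for all s. Define r(s) = (x(s) − a)/L(s), R(s) = (X(s) − A)/L(s). Then for any C¹ curve (s(t), ℓ(t)) with ℓ(t) > 0, the curves y(t) = a + ℓ(t) r(s(t)) in ℝ² and Y(t) = A + ℓ(t) R(s(t)) in ℝ³ satisfy ‖y'(t)‖ = ‖Y'(t)‖ for all t; both squared speeds equal (ℓ²/L²)(1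 − (L')²)(s')² + (ℓ')². -/
/-! Write `y = a + ℓ • r ∘ s` with the unit vector `r = (x - a) / L`. Since `‖r‖ = 1`, `r' ⟂ r`,
so `‖y'‖² = ℓ'² + ℓ² s'² ‖r'‖²`. Differentiating `x - a = L • r` gives `x' = L' • r + L • r'`,
again an orthogonal sum, so `1 = L'² + L² ‖r'‖²`. Hence `‖y'‖²` depends only on `ℓ`, `s` and `L`,
and the same computation in `ℝ²` and in `ℝ³` gives the same speed. -/

noncomputable section
open scoped RealInnerProductSpace
open Set

open Filter Topology

section Cone

variable {F : Type*} [NormedAddCommGroup F] [InnerProductSpace ℝ F]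

theorem norm_smul_add_smul_sq_of_inner_eq_zero {u v : F} (hu : ‖u‖ = 1) (huv : ⟪u, v⟫ = 0)
    (α β : ℝ) : ‖α • u + β • v‖ ^ 2 = α ^ 2 + β ^ 2 * ‖v‖ ^ 2 := by
  rw [norm_add_sq_real, real_inner_smul_left, real_inner_smul_right, huv, norm_smul, norm_smul,
    mul_pow, mul_pow, hu]
  simp

theorem inner_deriv_eq_zero_of_norm_eq_one {r : ℝ → F} {s : ℝ} (hr : DifferentiableAt ℝ r s)
    (hunit : ∀ᶠ u in 𝓝 s, ‖r u‖ = 1) : ⟪r s, deriv r s⟫ = 0 := by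
  have hconst : (‖r ·‖ ^ 2) =ᶠ[𝓝 s] fun _ => (1 : ℝ) := hunit.mono fun u hu => by simp [hu]
  have := hr.hasDerivAt.norm_sq.unique
    ((hasDerivAt_const s (1 : ℝ)).congr_of_eventuallyEq hconst)
  linarith

theorem eventually_norm_inv_smul_sub_eq_one {x : ℝ → F} {L : ℝ → ℝ} {a : F} {s : ℝ}
    (hL : ContinuousAt L s) (hL0 : L s ≠ 0) (hnorm : ∀ᶠ u in 𝓝 s, ‖x u - a‖ = L u) :
    ∀ᶠ u in 𝓝 s, ‖(L u)⁻¹ • (x u - a)‖ = 1 := by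
  filter_upwards [hnorm, hL.eventually_ne hL0] with u hu hu0
  rw [norm_smul, hu, norm_inv, Real.norm_eq_abs, abs_of_nonneg (hu ▸ norm_nonneg _),
    inv_mul_cancel₀ hu0]

theorem norm_deriv_sq_of_norm_sub_eq {x : ℝ → F} {L : ℝ → ℝ} {a : F} {s : ℝ}
    (hx : DifferentiableAt ℝ x s) (hL : DifferentiableAt ℝ L s) (hL0 : L s ≠ 0)
    (hnorm : ∀ᶠ u in 𝓝 s, ‖x u - a‖ = L u) :
    ‖deriv x s‖ ^ 2 =
      deriv L s ^ 2 + L s ^ 2 * ‖deriv (fun u => (L u)⁻¹ • (x u - a)) s‖ ^ 2 := by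
  set r := fun u => (L u)⁻¹ • (x u - a)
  have hr : DifferentiableAt ℝ r s := (hL.inv hL0).smul (hx.sub_const a)
  have hL0' : ∀ᶠ u in 𝓝 s, L u ≠ 0 := hL.continuousAt.eventually_ne hL0
  have hunit := eventually_norm_inv_smul_sub_eq_one hL.continuousAt hL0 hnorm
  have hdecomp : (fun u => L u • r u) =ᶠ[𝓝 s] fun u => x u - a := by
    filter_upwards [hL0'] with u hu0
    simp [r, smul_smul, mul_inv_cancel₀ hu0]
  have hx' : deriv x s = deriv L s • r s + L s • deriv r s := by
    rw [add_comm, ← ((hL.hasDerivAt.smul hr.hasDerivAt).congr_of_eventuallyEq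
      hdecomp.symm).unique (hx.hasDerivAt.sub_const a)]
  rw [hx', norm_smul_add_smul_sq_of_inner_eq_zero hunit.self_of_nhds
    (inner_deriv_eq_zero_of_norm_eq_one hr hunit)]

theorem norm_deriv_add_smul_comp_sq {r : ℝ → F} {σ lam : ℝ → ℝ} {t : ℝ} (a : F)
    (hr : DifferentiableAt ℝ r (σ t)) (hunit : ∀ᶠ u in 𝓝 (σ t), ‖r u‖ = 1)
    (hσ : DifferentiableAt ℝ σ t) (hlam : DifferentiableAt ℝ lam t) :
    ‖deriv (fun τ => a + lam τ • r (σ τ)) t‖ ^ 2 =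
      deriv lam t ^ 2 + (lam t * deriv σ t) ^ 2 * ‖deriv r (σ t)‖ ^ 2 := by
  have hy : HasDerivAt (fun τ => a + lam τ • r (σ τ))
      (lam t • deriv σ t • deriv r (σ t) + deriv lam t • r (σ t)) t :=
    (hlam.hasDerivAt.smul (hr.hasDerivAt.scomp t hσ.hasDerivAt)).const_add a
  rw [hy.deriv, add_comm, smul_smul, norm_smul_add_smul_sq_of_inner_eq_zero hunit.self_of_nhds
    (inner_deriv_eq_zero_of_norm_eq_one hr hunit)]

theorem norm_deriv_cone_curve_sq {x : ℝ → F} {L σ lam : ℝ → ℝ} {a : F} {t : ℝ}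
    (hx : DifferentiableAt ℝ x (σ t)) (hL : DifferentiableAt ℝ L (σ t)) (hL0 : L (σ t) ≠ 0)
    (harc : ‖deriv x (σ t)‖ = 1) (hnorm : ∀ᶠ u in 𝓝 (σ t), ‖x u - a‖ = L u)
    (hσ : DifferentiableAt ℝ σ t) (hlam : DifferentiableAt ℝ lam t) :
    ‖deriv (fun τ => a + lam τ • ((L (σ τ))⁻¹ • (x (σ τ) - a))) t‖ ^ 2 =
      (lam t ^ 2 / L (σ t) ^ 2) * (1 - deriv L (σ t) ^ 2) * deriv σ t ^ 2 + deriv lam t ^ 2 := by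
  set r := fun u => (L u)⁻¹ • (x u - a)
  have hr : DifferentiableAt ℝ r (σ t) := (hL.inv hL0).smul (hx.sub_const a)
  have hrate : ‖deriv r (σ t)‖ ^ 2 = (1 - deriv L (σ t) ^ 2) / L (σ t) ^ 2 := by
    have hspeed := norm_deriv_sq_of_norm_sub_eq hx hL hL0 hnorm
    rw [harc] at hspeed
    field_simp
    linarith
  rw [norm_deriv_add_smul_comp_sq a hr (eventually_norm_inv_smul_sub_eq_one hL.continuousAt hL0
    hnorm) hσ hlam, hrate]
  field_simp
  ring

end Cone

theorem cone_isometry_general (ℓ₀ : ℝ) (a : E2) (A : E3)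
    (x : ℝ → E2) (X : ℝ → E3) (L : ℝ → ℝ)
    (hx : ∀ s ∈ Ioo 0 ℓ₀, DifferentiableAt ℝ x s)
    (hX : ∀ s ∈ Ioo 0 ℓ₀, DifferentiableAt ℝ X s)
    (hL : ∀ s ∈ Ioo 0 ℓ₀, DifferentiableAt ℝ L s)
    (harcx : ∀ s ∈ Ioo 0 ℓ₀, ‖deriv x s‖ = 1)
    (harcX : ∀ s ∈ Ioo 0 ℓ₀, ‖deriv X s‖ = 1)
    (hLx : ∀ s ∈ Ioo 0 ℓ₀, ‖x s - a‖ = L s)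
    (hLX : ∀ s ∈ Ioo 0 ℓ₀, ‖X s - A‖ = L s)
    (hLpos : ∀ s ∈ Ioo 0 ℓ₀, 0 < L s)
    (σ lam : ℝ → ℝ) (t : ℝ)
    (hσ : DifferentiableAt ℝ σ t) (hlam : DifferentiableAt ℝ lam t)
    (hmem : σ t ∈ Ioo 0 ℓ₀) :
    ‖deriv (fun τ => a + lam τ • ((L (σ τ))⁻¹ • (x (σ τ) - a))) t‖ =
      ‖deriv (fun τ => A + lam τ • ((L (σ τ))⁻¹ • (X (σ τ) - A))) t‖ ∧
    ‖deriv (fun τ => a + lam τ • ((L (σ τ))⁻¹ • (x (σ τ) - a))) t‖ ^ 2 =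
      (lam t ^ 2 / L (σ t) ^ 2) * (1 - deriv L (σ t) ^ 2) * deriv σ t ^ 2
        + deriv lam t ^ 2 ∧
    ‖deriv (fun τ => A + lam τ • ((L (σ τ))⁻¹ • (X (σ τ) - A))) t‖ ^ 2 =
      (lam t ^ 2 / L (σ t) ^ 2) * (1 - deriv L (σ t) ^ 2) * deriv σ t ^ 2
        + deriv lam t ^ 2 := by
  have hnhds : Ioo 0 ℓ₀ ∈ 𝓝 (σ t) := isOpen_Ioo.mem_nhds hmem
  have hL0 : L (σ t) ≠ 0 := (hLpos _ hmem).ne'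
  have hflat := norm_deriv_cone_curve_sq (hx _ hmem) (hL _ hmem) hL0 (harcx _ hmem)
    (eventually_of_mem hnhds hLx) hσ hlam
  have hspace := norm_deriv_cone_curve_sq (hX _ hmem) (hL _ hmem) hL0 (harcX _ hmem)
    (eventually_of_mem hnhds hLX) hσ hlam
  refine ⟨?_, hflat, hspace⟩
  exact (pow_left_inj₀ (norm_nonneg _) (norm_nonneg _) two_ne_zero).mp (hflat.trans hspace.symm)

/-- cone isometry.  Matching crease arclengths and ruling lengths
on a cone makes corresponding curves y(t) = a + ℓ(t) r(s(t)) and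
Y(t) = A + ℓ(t) R(s(t)) have equal speeds. -/
theorem cone_isometry (ℓ₀ : ℝ) (a : E2) (A : E3)
    (x : ℝ → E2) (X : ℝ → E3) (L : ℝ → ℝ)
    (hx : ∀ s ∈ Ioo 0 ℓ₀, DifferentiableAt ℝ x s)
    (hX : ∀ s ∈ Ioo 0 ℓ₀, DifferentiableAt ℝ X s)
    (hL : ∀ s ∈ Ioo 0 ℓ₀, DifferentiableAt ℝ L s)
    (harcx : ∀ s ∈ Ioo 0 ℓ₀, ‖deriv x s‖ = 1)
    (harcX : ∀ s ∈ Ioo 0 ℓ₀, ‖deriv X s‖ = 1)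
    (hLx : ∀ s ∈ Ioo 0 ℓ₀, ‖x s - a‖ = L s)
    (hLX : ∀ s ∈ Ioo 0 ℓ₀, ‖X s - A‖ = L s)
    (hLpos : ∀ s ∈ Ioo 0 ℓ₀, 0 < L s)
    (σ lam : ℝ → ℝ) (t : ℝ)
    (hσ : DifferentiableAt ℝ σ t) (hlam : DifferentiableAt ℝ lam t)
    (hmem : σ t ∈ Ioo 0 ℓ₀) (hlpos : 0 < lam t) :
    ‖deriv (fun τ => a + lam τ • ((L (σ τ))⁻¹ • (x (σ τ) - a))) t‖ =
      ‖deriv (fun τ => A + lam τ • ((L (σ τ))⁻¹ • (X (σ τ) - A))) t‖ ∧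
    ‖deriv (fun τ => a + lam τ • ((L (σ τ))⁻¹ • (x (σ τ) - a))) t‖ ^ 2 =
      (lam t ^ 2 / L (σ t) ^ 2) * (1 - deriv L (σ t) ^ 2) * deriv σ t ^ 2
        + deriv lam t ^ 2 ∧
    ‖deriv (fun τ => A + lam τ • ((L (σ τ))⁻¹ • (X (σ τ) - A))) t‖ ^ 2 =
      (lam t ^ 2 / L (σ t) ^ 2) * (1 - deriv L (σ t) ^ 2) * deriv σ t ^ 2
        + deriv lam t ^ 2 :=
  cone_isometry_general ℓ₀ a A x X L hx hX hL harcx harcX hLx hLX hLpos σ lam t hσ hlam hmem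
end
end

section
/- Cylinder isometry: let r ∈ ℝ² and R ∈ ℝ³ be fixed unit vectors, let c : (0,ℓ₀) → ℝ² and C : (0,ℓ₀) → ℝ³ be C¹ curves with c'(s) ⬝ r = 0 and C'(s) ⬝ R = 0 for all s, and let L : (0,ℓ₀) → ℝ be C¹ such that x(s) = c(s) + L(s) r and X(s) = C(s) + L(s) R are both arclength-parameterized. Then for any C¹ path (s(t), ℓ(t)), the curves y(t) = c(s(t)) + ℓ(t) r and Y(t) = C(s(t)) + ℓ(t) R satisfy ‖y'(t)‖ = ‖Y'(t)‖; both squared speeds equal (1 − (L')²)(s')² + (ℓ')². -/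
noncomputable section
open scoped RealInnerProductSpace
open Set

/-!
The velocity of `τ ↦ c (σ τ) + lam τ • r` is `σ' • c'(σ) + lam' • r`, and `c' ⊥ r` with `‖r‖ = 1`
makes its squared norm `σ'² ‖c'‖² + lam'²`. Applying the same computation to the unit-speed curve
`u ↦ c u + L u • r` gives `‖c'‖² = 1 - L'²`, a quantity that no longer refers to the ambient
space, so the two cylinders have the same speeds.
-/

section

variable {F : Type*} [NormedAddCommGroup F] [InnerProductSpace ℝ F] {r : F}

lemma norm_add_smul_sq_of_inner_eq_zero (hr : ‖r‖ = 1) {v : F} (hv : ⟪v, r⟫ = 0) (b : ℝ) :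
    ‖v + b • r‖ ^ 2 = ‖v‖ ^ 2 + b ^ 2 := by
  rw [norm_add_sq_real, real_inner_smul_right, hv, norm_smul, hr]
  simp [sq_abs]

lemma hasDerivAt_comp_add_smul_const {c : ℝ → F} {σ lam : ℝ → ℝ} {t : ℝ}
    (hc : DifferentiableAt ℝ c (σ t)) (hσ : DifferentiableAt ℝ σ t)
    (hlam : DifferentiableAt ℝ lam t) :
    HasDerivAt (fun τ => c (σ τ) + lam τ • r) (deriv σ t • deriv c (σ t) + deriv lam t • r) t :=
  (hc.hasDerivAt.scomp t hσ.hasDerivAt).add (hlam.hasDerivAt.smul_const r)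

lemma norm_deriv_comp_add_smul_const_sq (hr : ‖r‖ = 1) {c : ℝ → F} {σ lam : ℝ → ℝ} {t : ℝ}
    (hc : DifferentiableAt ℝ c (σ t)) (hσ : DifferentiableAt ℝ σ t)
    (hlam : DifferentiableAt ℝ lam t) (hcr : ⟪deriv c (σ t), r⟫ = 0) :
    ‖deriv (fun τ => c (σ τ) + lam τ • r) t‖ ^ 2 =
      ‖deriv c (σ t)‖ ^ 2 * deriv σ t ^ 2 + deriv lam t ^ 2 := by
  have hperp : ⟪deriv σ t • deriv c (σ t), r⟫ = 0 := by
    rw [real_inner_smul_left, hcr, mul_zero]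
  rw [(hasDerivAt_comp_add_smul_const hc hσ hlam).deriv,
    norm_add_smul_sq_of_inner_eq_zero hr hperp, norm_smul, mul_pow, Real.norm_eq_abs, sq_abs,
    mul_comm]

lemma norm_deriv_sq_eq_one_sub_of_unit_speed (hr : ‖r‖ = 1) {c : ℝ → F} {L : ℝ → ℝ} {s : ℝ}
    (hc : DifferentiableAt ℝ c s) (hL : DifferentiableAt ℝ L s) (hcr : ⟪deriv c s, r⟫ = 0)
    (harc : ‖deriv (fun u => c u + L u • r) s‖ = 1) :
    ‖deriv c s‖ ^ 2 = 1 - deriv L s ^ 2 := by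
  have hspeed := norm_deriv_comp_add_smul_const_sq (σ := id) hr hc differentiableAt_id hL hcr
  simp only [deriv_id, one_pow, mul_one, id, harc] at hspeed
  linarith

lemma norm_deriv_cylinder_sq (hr : ‖r‖ = 1) {c : ℝ → F} {L σ lam : ℝ → ℝ} {t : ℝ}
    (hc : DifferentiableAt ℝ c (σ t)) (hL : DifferentiableAt ℝ L (σ t))
    (hσ : DifferentiableAt ℝ σ t) (hlam : DifferentiableAt ℝ lam t)
    (hcr : ⟪deriv c (σ t), r⟫ = 0) (harc : ‖deriv (fun u => c u + L u • r) (σ t)‖ = 1) :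
    ‖deriv (fun τ => c (σ τ) + lam τ • r) t‖ ^ 2 =
      (1 - deriv L (σ t) ^ 2) * deriv σ t ^ 2 + deriv lam t ^ 2 := by
  rw [norm_deriv_comp_add_smul_const_sq hr hc hσ hlam hcr,
    norm_deriv_sq_eq_one_sub_of_unit_speed hr hc hL hcr harc]

end

/-- cylinder isometry.  With rulings along fixed unit directions
r and R perpendicular to the base curves, corresponding curves
y(t) = c(s(t)) + ℓ(t) r and Y(t) = C(s(t)) + ℓ(t) R have equal speeds. -/
theorem cylinder_isometry (ℓ₀ : ℝ) (r : E2) (R : E3)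
    (c : ℝ → E2) (C : ℝ → E3) (L : ℝ → ℝ)
    (hr : ‖r‖ = 1) (hR : ‖R‖ = 1)
    (hc : ∀ s ∈ Ioo 0 ℓ₀, DifferentiableAt ℝ c s)
    (hC : ∀ s ∈ Ioo 0 ℓ₀, DifferentiableAt ℝ C s)
    (hL : ∀ s ∈ Ioo 0 ℓ₀, DifferentiableAt ℝ L s)
    (hcr : ∀ s ∈ Ioo 0 ℓ₀, ⟪deriv c s, r⟫ = 0)
    (hCR : ∀ s ∈ Ioo 0 ℓ₀, ⟪deriv C s, R⟫ = 0)
    (harcx : ∀ s ∈ Ioo 0 ℓ₀, ‖deriv (fun u => c u + L u • r) s‖ = 1)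
    (harcX : ∀ s ∈ Ioo 0 ℓ₀, ‖deriv (fun u => C u + L u • R) s‖ = 1)
    (σ lam : ℝ → ℝ) (t : ℝ)
    (hσ : DifferentiableAt ℝ σ t) (hlam : DifferentiableAt ℝ lam t)
    (hmem : σ t ∈ Ioo 0 ℓ₀) :
    ‖deriv (fun τ => c (σ τ) + lam τ • r) t‖ =
      ‖deriv (fun τ => C (σ τ) + lam τ • R) t‖ ∧
    ‖deriv (fun τ => c (σ τ) + lam τ • r) t‖ ^ 2 =
      (1 - deriv L (σ t) ^ 2) * deriv σ t ^ 2 + deriv lam t ^ 2 ∧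
    ‖deriv (fun τ => C (σ τ) + lam τ • R) t‖ ^ 2 =
      (1 - deriv L (σ t) ^ 2) * deriv σ t ^ 2 + deriv lam t ^ 2 := by
  have hy := norm_deriv_cylinder_sq hr (hc _ hmem) (hL _ hmem) hσ hlam (hcr _ hmem) (harcx _ hmem)
  have hY := norm_deriv_cylinder_sq hR (hC _ hmem) (hL _ hmem) hσ hlam (hCR _ hmem) (harcX _ hmem)
  exact ⟨(sq_eq_sq₀ (norm_nonneg _) (norm_nonneg _)).1 (hy.trans hY.symm), hy, hY⟩
end
end

section
/- Let ℓ : [0,1] → ℝ be C¹ and convex with ℓ ≥ 0, let u ∈ [0,1), v > 0, and suppose v/2 − (ℓ(t) + ℓ'(t)(u − t)) > 0 for all t ∈ (0,1) (the tangent line to the lens at t passes below the vertex (u, v/2)). Define h(t)² = (v − v*)((v + v*)/4 − ℓ(t)) + (t − u)² for a parameter v* ∈ (0, v). Then h'(t)² < 1 for all t ∈ (0,1) if and only if v − v* < 4[v/2 − (ℓ(t) + ℓ'(t)(u − t))] / [1 + ℓ'(t)²] for all t ∈ (0,1). -/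
/-!
Differentiating `h² = (v - v*)((v + v*)/4 - ℓ) + (t - u)²` gives `h h' = (t - u) - (v - v*) ℓ'/2`,
and with `T = v/2 - (ℓ + ℓ'(u - t))` one has the identity
`h² - (h h')² = (v - v*)/4 · (4T - (v - v*)(1 + ℓ'²))`.
Since `v - v* > 0`, `h'² < 1` is therefore equivalent to `v - v* < 4T / (1 + ℓ'²)`, pointwise in `t`.
-/

noncomputable section
open scoped RealInnerProductSpace
open Set

open Filter Topology

theorem deriv_eq_div_of_sq_eventuallyEq {h g : ℝ → ℝ} {t g' : ℝ} (hd : DifferentiableAt ℝ h t)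
    (hne : h t ≠ 0) (hsq : (fun s => h s ^ 2) =ᶠ[𝓝 t] g) (hg : HasDerivAt g g' t) :
    deriv h t = g' / (2 * h t) := by
  have hg_alt : HasDerivAt g (2 * h t * deriv h t) t := by
    simpa using (hd.hasDerivAt.pow 2).congr_of_eventuallyEq hsq.symm
  rw [← hg_alt.unique hg, mul_div_cancel_left₀ _ (mul_ne_zero two_ne_zero hne)]

theorem hasDerivAt_trapezoid_height_sq {ℓ : ℝ → ℝ} {t : ℝ} (u v vs : ℝ)
    (hℓ : DifferentiableAt ℝ ℓ t) :
    HasDerivAt (fun s => (v - vs) * ((v + vs) / 4 - ℓ s) + (s - u) ^ 2)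
      (2 * ((t - u) - (v - vs) * deriv ℓ t / 2)) t := by
  refine ((((hasDerivAt_const t ((v + vs) / 4)).sub hℓ.hasDerivAt).const_mul (v - vs)).add
    (((hasDerivAt_id' t).sub_const u).pow 2)).congr_deriv ?_
  ring

theorem trapezoid_slope_sq_lt_iff {u v vs ℓ L t : ℝ} (hvs : vs < v) :
    ((t - u) - (v - vs) * L / 2) ^ 2 < (v - vs) * ((v + vs) / 4 - ℓ) + (t - u) ^ 2 ↔
      v - vs < 4 * (v / 2 - (ℓ + L * (u - t))) / (1 + L ^ 2) := by
  have hA : 0 < v - vs := sub_pos.mpr hvs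
  have key : (v - vs) * ((v + vs) / 4 - ℓ) + (t - u) ^ 2 - ((t - u) - (v - vs) * L / 2) ^ 2
      = (v - vs) / 4 * (4 * (v / 2 - (ℓ + L * (u - t))) - (v - vs) * (1 + L ^ 2)) := by
    ring
  rw [← sub_pos, key, mul_pos_iff_of_pos_left (by positivity), sub_pos,
    lt_div_iff₀ (by positivity)]

theorem lens_slope_condition_general (ℓ : ℝ → ℝ) (u v vs : ℝ) (h : ℝ → ℝ)
    (hℓC1 : ContDiffOn ℝ 1 ℓ (Icc 0 1))
    (hvs : vs ∈ Ioo 0 v)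
    (hhdef : ∀ t ∈ Ioo 0 1,
      h t ^ 2 = (v - vs) * ((v + vs) / 4 - ℓ t) + (t - u) ^ 2)
    (hhpos : ∀ t ∈ Ioo 0 1, 0 < h t)
    (hhdiff : ∀ t ∈ Ioo 0 1, DifferentiableAt ℝ h t) :
    (∀ t ∈ Ioo 0 1, deriv h t ^ 2 < 1) ↔
    (∀ t ∈ Ioo 0 1,
      v - vs < 4 * (v / 2 - (ℓ t + deriv ℓ t * (u - t))) / (1 + deriv ℓ t ^ 2)) := by
  refine forall₂_congr fun t ht => ?_
  have hℓ : DifferentiableAt ℝ ℓ t :=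
    (hℓC1.contDiffAt (Icc_mem_nhds ht.1 ht.2)).differentiableAt one_ne_zero
  have hsq : (fun s => h s ^ 2) =ᶠ[𝓝 t]
      fun s => (v - vs) * ((v + vs) / 4 - ℓ s) + (s - u) ^ 2 :=
    eventually_of_mem (isOpen_Ioo.mem_nhds ht) hhdef
  have hderiv : deriv h t = ((t - u) - (v - vs) * deriv ℓ t / 2) / h t := by
    rw [deriv_eq_div_of_sq_eventuallyEq (hhdiff t ht) (hhpos t ht).ne' hsq
      (hasDerivAt_trapezoid_height_sq u v vs hℓ), mul_div_mul_left _ _ two_ne_zero]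
  rw [hderiv, div_pow, div_lt_one (pow_pos (hhpos t ht) 2), hhdef t ht]
  exact trapezoid_slope_sq_lt_iff hvs.2

/-- the trapezoid-height slope condition h'(t)² < 1 holds for all
t ∈ (0,1) iff v − v* is small enough relative to the tangent lines of the lens. -/
theorem lens_slope_condition (ℓ : ℝ → ℝ) (u v vs : ℝ) (h : ℝ → ℝ)
    (hℓC1 : ContDiffOn ℝ 1 ℓ (Icc 0 1))
    (hconv : ConvexOn ℝ (Icc 0 1) ℓ)
    (hℓ0 : ∀ t ∈ Icc 0 1, 0 ≤ ℓ t)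
    (hu : u ∈ Ico (0:ℝ) 1) (hv : 0 < v)
    (htangent : ∀ t ∈ Ioo 0 1, 0 < v / 2 - (ℓ t + deriv ℓ t * (u - t)))
    (hvs : vs ∈ Ioo 0 v)
    (hhdef : ∀ t ∈ Ioo 0 1,
      h t ^ 2 = (v - vs) * ((v + vs) / 4 - ℓ t) + (t - u) ^ 2)
    (hhpos : ∀ t ∈ Ioo 0 1, 0 < h t)
    (hhdiff : ∀ t ∈ Ioo 0 1, DifferentiableAt ℝ h t) :
    (∀ t ∈ Ioo 0 1, deriv h t ^ 2 < 1) ↔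
    (∀ t ∈ Ioo 0 1,
      v - vs < 4 * (v / 2 - (ℓ t + deriv ℓ t * (u - t))) / (1 + deriv ℓ t ^ 2)) :=
  lens_slope_condition_general ℓ u v vs h hℓC1 hvs hhdef hhpos hhdiff
end
end
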